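/- Let N be even, ω = 2π/N, and ξ_j ∈ ℝ^N with k-th entry cos(kjω) (k = 0,...,N-1). Then the image of {u ∈ ℝ^N : u^T u = ℰ} under the map f with f_j(u) = Σ_{k=0}^{N-1} u_k u_{(k-j) mod N}, j = 0,...,n-1, equals the convex hull conv{ℰ ξ_0(1:n), ℰ ξ_1(1:n), ..., ℰ ξ_{N/2}(1:n)}, where ξ_j(1:n) denotes the first n entries of ξ_j. -/

import Mathlib

/-!
Write `ω = 2π/N` and `ξ_q k = cos (k q ω)` (this is `cosMode N q`). By Wiener–Khinchin the autocorrelation of `u` is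
`(1/N) ∑_{m<N} |û_m|² ξ_m`, where `û` is the discrete Fourier transform of `u`; by Parseval the
weights `|û_m|² / (N ℰ)` sum to one on the sphere `uᵀu = ℰ`, and `ξ_{N-m} = ξ_m` folds every
frequency into `[0, N/2]`. Conversely, the `ξ_q` with `q ≤ N/2` are orthogonal and the
autocorrelation of `∑ b_q ξ_q` is `∑ b_q² ‖ξ_q‖² ξ_q`, so `b_q = √(λ_q ℰ / ‖ξ_q‖²)` realises the
convex combination `∑ λ_q ℰ ξ_q`. Keeping only the first `n` lags is a linear map, and linear
maps commute with convex hulls.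
-/

open Finset Real

section ConvexHull

variable {ι 𝕜 V : Type*} [Field 𝕜] [LinearOrder 𝕜] [IsStrictOrderedRing 𝕜]
  [AddCommGroup V] [Module 𝕜 V]

theorem Finset.exists_sum_smul_eq_of_mem_convexHull_image {t : Finset ι} {v : ι → V} {x : V}
    (hx : x ∈ convexHull 𝕜 (v '' t)) :
    ∃ w : ι → 𝕜, (∀ i ∈ t, 0 ≤ w i) ∧ ∑ i ∈ t, w i = 1 ∧ ∑ i ∈ t, w i • v i = x := by
  classical
  refine convexHull_min
    (t := {x | ∃ w : ι → 𝕜, (∀ i ∈ t, 0 ≤ w i) ∧ ∑ i ∈ t, w i = 1 ∧ ∑ i ∈ t, w i • v i = x})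
    ?_ ?_ hx
  · rintro _ ⟨i, hi, rfl⟩
    rw [Finset.mem_coe] at hi
    refine ⟨Pi.single i 1, fun j _ => ?_, ?_, ?_⟩
    · by_cases hj : j = i <;> simp [hj]
    · simp [Pi.single_apply, hi]
    · simp [Pi.single_apply, ite_smul, hi]
  · rintro _ ⟨w, hw0, hw1, rfl⟩ _ ⟨w', hw0', hw1', rfl⟩ a b ha hb hab
    refine ⟨a • w + b • w', fun i hi => ?_, ?_, ?_⟩
    · exact add_nonneg (mul_nonneg ha (hw0 i hi)) (mul_nonneg hb (hw0' i hi))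
    · simp [sum_add_distrib, ← mul_sum, hw1, hw1', hab]
    · simp [add_smul, mul_smul, sum_add_distrib, ← smul_sum]

end ConvexHull

section RootsOfUnity

variable {N : ℕ}

theorem sum_range_exp_int_mul_two_pi_div (hN : N ≠ 0) (t : ℤ) :
    ∑ m ∈ range N, Complex.exp (↑(t * m * (2 * π / N)) * Complex.I) =
      if (N : ℤ) ∣ t then (N : ℂ) else 0 := by
  set ζ := Complex.exp (2 * π * Complex.I / N) with hζdef
  have hζ : IsPrimitiveRoot ζ N := Complex.isPrimitiveRoot_exp N hN
  have hpow : ∀ m : ℕ, Complex.exp (↑(t * m * (2 * π / N)) * Complex.I) = (ζ ^ t) ^ m := by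
    intro m
    rw [hζdef, ← zpow_natCast, ← _root_.zpow_mul, ← Complex.exp_int_mul]
    congr 1
    push_cast
    ring
  simp_rw [hpow]
  split_ifs with ht
  · simp [(hζ.zpow_eq_one_iff_dvd t).2 ht]
  · have hN1 : (ζ ^ t) ^ N = 1 := by
      rw [← zpow_natCast, ← _root_.zpow_mul, mul_comm, _root_.zpow_mul, zpow_natCast,
        hζ.pow_eq_one, one_zpow]
    rw [geom_sum_eq (mt (hζ.zpow_eq_one_iff_dvd t).1 ht), hN1, sub_self, zero_div]

theorem sum_cos_int_mul_two_pi_div_add (hN : N ≠ 0) (t : ℤ) (φ : ℝ) :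
    ∑ k : Fin N, cos (t * (k : ℕ) * (2 * π / N) + φ) =
      if (N : ℤ) ∣ t then N * cos φ else 0 := by
  have hre : ∀ m : ℕ, cos (t * m * (2 * π / N) + φ) =
      (Complex.exp (φ * Complex.I) * Complex.exp (↑(t * m * (2 * π / N)) * Complex.I)).re := by
    intro m
    rw [← Complex.exp_add, ← add_mul, ← Complex.ofReal_add, Complex.exp_ofReal_mul_I_re,
      add_comm]
  rw [Fin.sum_univ_eq_sum_range (fun m => cos (t * m * (2 * π / N) + φ))]
  simp_rw [hre, ← Complex.re_sum, ← mul_sum, sum_range_exp_int_mul_two_pi_div hN]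
  split_ifs
  · rw [mul_comm, ← Complex.ofReal_natCast, Complex.re_ofReal_mul, Complex.exp_ofReal_mul_I_re]
  · simp

theorem cos_int_mul_two_pi_div_of_modEq (hN : N ≠ 0) {a b : ℤ} (h : a ≡ b [ZMOD N]) :
    cos (a * (2 * π / N)) = cos (b * (2 * π / N)) := by
  obtain ⟨c, hc⟩ := h.dvd
  have hb : (b : ℝ) * (2 * π / N) = a * (2 * π / N) + c * (2 * π) := by
    rw [show (b : ℝ) = a + N * c by exact_mod_cast (by omega : b = a + N * c)]
    field_simp
  rw [hb, cos_add_int_mul_two_pi]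

end RootsOfUnity

theorem Fin.intCast_val_sub_modEq {N : ℕ} (a b : Fin N) :
    (((a - b : Fin N) : ℕ) : ℤ) ≡ a - b [ZMOD N] := by
  rcases le_or_gt b a with h | h
  · rw [Fin.coe_sub_iff_le.2 h, Nat.cast_sub h]
  · rw [Fin.coe_sub_iff_lt.2 h, Int.modEq_iff_dvd]
    exact ⟨-1, by omega⟩

theorem Fin.natCast_dvd_sub_sub_iff {N : ℕ} [NeZero N] (a b j : Fin N) :
    (N : ℤ) ∣ (a : ℤ) - b - j ↔ b = a - j := by
  have hmod : (((a - j - b : Fin N) : ℕ) : ℤ) ≡ (a : ℤ) - b - j [ZMOD N] := by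
    rw [sub_right_comm (a : ℤ)]
    exact (Fin.intCast_val_sub_modEq (a - j) b).trans
      ((Fin.intCast_val_sub_modEq a j).sub_right b)
  have hdvd : (N : ℤ) ∣ (a : ℤ) - b - j ↔ (N : ℤ) ∣ ((a - j - b : Fin N) : ℕ) := by
    simp only [← Int.modEq_zero_iff_dvd]
    exact ⟨hmod.trans, hmod.symm.trans⟩
  rw [hdvd, Int.natCast_dvd_natCast, eq_comm, ← sub_eq_zero, ← Fin.val_eq_zero_iff]
  exact ⟨fun h => Nat.eq_zero_of_dvd_of_lt h (Fin.is_lt _), fun h => h ▸ dvd_zero N⟩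

section Autocorrelation

variable {N : ℕ}

def autocorrelation (u : Fin N → ℝ) (j : Fin N) : ℝ := ∑ k, u k * u (k - j)

theorem autocorrelation_zero [NeZero N] (u : Fin N → ℝ) :
    autocorrelation u 0 = dotProduct u u := by
  simp [autocorrelation, dotProduct]

noncomputable def powerSpectrum (u : Fin N → ℝ) (m : ℕ) : ℝ :=
  ‖∑ k : Fin N, (u k : ℂ) * Complex.exp (↑((k : ℕ) * m * (2 * π / N)) * Complex.I)‖ ^ 2

theorem sum_range_exp_fin_sub_sub [NeZero N] (a b j : Fin N) :
    ∑ m ∈ range N, Complex.exp (↑(((a : ℝ) - b - j) * m * (2 * π / N)) * Complex.I) =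
      if b = a - j then (N : ℂ) else 0 := by
  have h := sum_range_exp_int_mul_two_pi_div (NeZero.ne N) ((a : ℤ) - b - j)
  simpa only [Int.cast_sub, Int.cast_natCast, Fin.natCast_dvd_sub_sub_iff] using h

theorem sum_powerSpectrum_mul_cexp [NeZero N] (u : Fin N → ℝ) (j : Fin N) :
    ∑ m ∈ range N,
        (powerSpectrum u m : ℂ) * Complex.exp (↑(-((j : ℕ) * m * (2 * π / N))) * Complex.I) =
      N * autocorrelation u j := by
  have hconj : ∀ x : ℝ, (starRingEnd ℂ) (Complex.exp (x * Complex.I)) =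
      Complex.exp (↑(-x) * Complex.I) := by
    intro x
    rw [← Complex.exp_conj]
    simp
  have hterm : ∀ m : ℕ,
      (powerSpectrum u m : ℂ) * Complex.exp (↑(-((j : ℕ) * m * (2 * π / N))) * Complex.I) =
        ∑ a : Fin N, ∑ b : Fin N, (u a * u b : ℂ) *
          Complex.exp (↑(((a : ℝ) - b - j) * m * (2 * π / N)) * Complex.I) := by
    intro m
    rw [powerSpectrum, Complex.ofReal_pow, ← Complex.mul_conj', map_sum, sum_mul_sum, sum_mul]
    refine sum_congr rfl fun a _ => ?_
    rw [sum_mul]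
    refine sum_congr rfl fun b _ => ?_
    rw [map_mul, Complex.conj_ofReal, hconj, mul_mul_mul_comm, mul_assoc, ← Complex.exp_add,
      ← Complex.exp_add, ← add_mul, ← add_mul, ← Complex.ofReal_add, ← Complex.ofReal_add]
    congr 4
    ring
  rw [sum_congr rfl fun m _ => hterm m, sum_comm, autocorrelation, Complex.ofReal_sum, mul_sum]
  refine sum_congr rfl fun a _ => ?_
  rw [sum_comm]
  simp_rw [← mul_sum, sum_range_exp_fin_sub_sub, mul_ite, mul_zero, sum_ite_eq', mem_univ,
    if_true]
  push_cast
  ring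

theorem sum_powerSpectrum_mul_cos [NeZero N] (u : Fin N → ℝ) (j : Fin N) :
    ∑ m ∈ range N, powerSpectrum u m * cos ((j : ℕ) * m * (2 * π / N)) =
      N * autocorrelation u j := by
  have h := congrArg Complex.re (sum_powerSpectrum_mul_cexp u j)
  rw [Complex.re_sum, ← Complex.ofReal_natCast, ← Complex.ofReal_mul, Complex.ofReal_re] at h
  simpa only [Complex.re_ofReal_mul, Complex.exp_ofReal_mul_I_re, cos_neg] using h

theorem sum_powerSpectrum [NeZero N] (u : Fin N → ℝ) :
    ∑ m ∈ range N, powerSpectrum u m = N * dotProduct u u := by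
  simpa [autocorrelation_zero] using sum_powerSpectrum_mul_cos u 0

end Autocorrelation

section CosModes

variable {N : ℕ}

noncomputable def cosMode (N q : ℕ) (k : Fin N) : ℝ := cos ((k : ℕ) * q * (2 * π / N))

theorem cosMode_sub {m : ℕ} (hm : m ≤ N) (hN : N ≠ 0) : cosMode N (N - m) = cosMode N m := by
  funext k
  rw [cosMode, cosMode, ← cos_nat_mul_two_pi_sub _ k]
  congr 1
  rw [Nat.cast_sub hm]
  field_simp
  ring

/-- For `q ≤ N / 2` this is `∑ₖ (cosMode N q k)²`. -/
noncomputable def cosModeNormSq (N q : ℕ) : ℝ := N / 2 * (1 + if N ∣ 2 * q then 1 else 0)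

theorem cosModeNormSq_pos [NeZero N] (q : ℕ) : 0 < cosModeNormSq N q := by
  have : (0 : ℝ) < N := Nat.cast_pos.2 (Nat.pos_of_neZero N)
  unfold cosModeNormSq
  split_ifs <;> positivity

theorem sum_cosMode_mul_cosMode_sub [NeZero N] (q p : ℕ) (j : Fin N) :
    ∑ k, cosMode N q k * cosMode N p (k - j) =
      N / 2 * ((if (N : ℤ) ∣ (q : ℤ) - p then 1 else 0) +
        (if (N : ℤ) ∣ (q : ℤ) + p then 1 else 0)) * cosMode N p j := by
  have hN := NeZero.ne N
  simp only [cosMode]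
  set ω := 2 * π / N
  have hper : ∀ k : Fin N,
      cos (((k - j : Fin N) : ℕ) * p * ω) = cos (((k : ℕ) - (j : ℕ) : ℝ) * p * ω) := by
    intro k
    have h := cos_int_mul_two_pi_div_of_modEq hN ((Fin.intCast_val_sub_modEq k j).mul_right p)
    push_cast at h
    exact h
  have hprod : ∀ k : ℕ, cos (k * q * ω) * cos ((k - (j : ℕ) : ℝ) * p * ω) =
      (cos (((q : ℤ) - p : ℤ) * k * ω + (j : ℕ) * p * ω) +
        cos (((q : ℤ) + p : ℤ) * k * ω + -((j : ℕ) * p * ω))) / 2 := by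
    intro k
    have e₁ : (((q : ℤ) - p : ℤ) : ℝ) * k * ω + (j : ℕ) * p * ω =
        k * q * ω - (k * p * ω - (j : ℕ) * p * ω) := by
      push_cast; ring
    have e₂ : (((q : ℤ) + p : ℤ) : ℝ) * k * ω + -((j : ℕ) * p * ω) =
        k * q * ω + (k * p * ω - (j : ℕ) * p * ω) := by
      push_cast; ring
    have e₃ : ((k : ℝ) - (j : ℕ)) * p * ω = k * p * ω - (j : ℕ) * p * ω := by ring
    rw [e₁, e₂, e₃, ← two_mul_cos_mul_cos]
    ring
  simp_rw [hper, hprod]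
  rw [← sum_div, sum_add_distrib, sum_cos_int_mul_two_pi_div_add hN,
    sum_cos_int_mul_two_pi_div_add hN, cos_neg]
  split_ifs <;> ring

theorem sum_cosMode_mul_cosMode_sub_of_le_half [NeZero N] {q p : ℕ} (hq : q ≤ N / 2)
    (hp : p ≤ N / 2) (j : Fin N) :
    ∑ k, cosMode N q k * cosMode N p (k - j) =
      if q = p then cosModeNormSq N q * cosMode N q j else 0 := by
  rw [sum_cosMode_mul_cosMode_sub]
  by_cases hqp : q = p
  · subst hqp
    have h2q : (N : ℤ) ∣ (q : ℤ) + q ↔ N ∣ 2 * q := by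
      rw [← two_mul]
      exact_mod_cast Iff.rfl
    simp only [sub_self, dvd_zero, if_true, h2q, cosModeNormSq]
  · have hsub : ¬ (N : ℤ) ∣ (q : ℤ) - p := fun h =>
      hqp (by have := Int.eq_zero_of_abs_lt_dvd h (by rw [abs_lt]; omega); omega)
    have hadd : ¬ (N : ℤ) ∣ (q : ℤ) + p := fun h =>
      hqp (by have := Int.eq_zero_of_dvd_of_nonneg_of_lt (by omega) (by omega) h; omega)
    simp [hqp, hsub, hadd]

theorem autocorrelation_sum_smul_cosMode [NeZero N] (b : ℕ → ℝ) (j : Fin N) :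
    autocorrelation (∑ q ∈ Iic (N / 2), b q • cosMode N q) j =
      ∑ q ∈ Iic (N / 2), b q ^ 2 * cosModeNormSq N q * cosMode N q j := by
  simp_rw [autocorrelation, Finset.sum_apply, Pi.smul_apply, smul_eq_mul, sum_mul_sum]
  rw [sum_comm]
  refine sum_congr rfl fun q hq => ?_
  rw [sum_comm]
  have hinner : ∀ p ∈ Iic (N / 2),
      ∑ k, b q * cosMode N q k * (b p * cosMode N p (k - j)) =
        if q = p then b q ^ 2 * cosModeNormSq N q * cosMode N q j else 0 := by
    intro p hp
    simp_rw [mul_mul_mul_comm (b q), ← mul_sum,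
      sum_cosMode_mul_cosMode_sub_of_le_half (mem_Iic.1 hq) (mem_Iic.1 hp)]
    split_ifs with h
    · subst h; ring
    · rw [mul_zero]
  rw [sum_congr rfl hinner, sum_ite_eq, if_pos hq]

end CosModes

section AutocorrelationImage

variable {N : ℕ} [NeZero N] {E : ℝ}

theorem autocorrelation_mem_convexHull (hE : 0 < E) {u : Fin N → ℝ} (hu : dotProduct u u = E) :
    autocorrelation u ∈ convexHull ℝ ((fun q => E • cosMode N q) '' Set.Iic (N / 2)) := by
  have hN : (0 : ℝ) < N := Nat.cast_pos.2 (Nat.pos_of_neZero N)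
  have hcomb : autocorrelation u =
      ∑ m ∈ range N, (powerSpectrum u m / (N * E)) • E • cosMode N m := by
    funext j
    rw [Finset.sum_apply, ← mul_div_cancel_left₀ (autocorrelation u j) hN.ne',
      ← sum_powerSpectrum_mul_cos, sum_div]
    refine sum_congr rfl fun m _ => ?_
    simp only [cosMode, Pi.smul_apply, smul_eq_mul]
    field_simp
  have hfold : ∀ m ∈ range N,
      E • cosMode N m ∈ (fun q => E • cosMode N q) '' Set.Iic (N / 2) := by
    intro m hm
    by_cases hmN : m ≤ N / 2
    · exact ⟨m, hmN, rfl⟩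
    · exact ⟨N - m, Set.mem_Iic.2 (by omega),
        by simp only [cosMode_sub (mem_range.1 hm).le (NeZero.ne N)]⟩
  rw [hcomb]
  refine (convex_convexHull ℝ _).sum_mem (fun m _ => div_nonneg (sq_nonneg _) (by positivity)) ?_
    fun m hm => subset_convexHull ℝ _ (hfold m hm)
  rw [← sum_div, sum_powerSpectrum, hu, div_self (by positivity)]

theorem exists_autocorrelation_eq_of_mem_convexHull (hE : 0 < E) {x : Fin N → ℝ}
    (hx : x ∈ convexHull ℝ ((fun q => E • cosMode N q) '' Set.Iic (N / 2))) :
    ∃ u : Fin N → ℝ, dotProduct u u = E ∧ autocorrelation u = x := by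
  rw [← coe_Iic] at hx
  obtain ⟨w, hw0, hw1, rfl⟩ := Finset.exists_sum_smul_eq_of_mem_convexHull_image hx
  set b : ℕ → ℝ := fun q => √(w q * E / cosModeNormSq N q)
  have hb : ∀ q ∈ Iic (N / 2), b q ^ 2 * cosModeNormSq N q = w q * E := fun q hq => by
    rw [sq_sqrt (div_nonneg (mul_nonneg (hw0 q hq) hE.le) (cosModeNormSq_pos q).le),
      div_mul_cancel₀ _ (cosModeNormSq_pos q).ne']
  have hu : ∀ j, autocorrelation (∑ q ∈ Iic (N / 2), b q • cosMode N q) j =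
      ∑ q ∈ Iic (N / 2), w q * (E * cosMode N q j) := by
    intro j
    rw [autocorrelation_sum_smul_cosMode]
    exact sum_congr rfl fun q hq => by rw [hb q hq, mul_assoc]
  refine ⟨∑ q ∈ Iic (N / 2), b q • cosMode N q, ?_, funext fun j => ?_⟩
  · simp [← autocorrelation_zero, hu, cosMode, ← sum_mul, hw1]
  · simp [hu, Finset.sum_apply]

theorem autocorrelation_image_sphere (hE : 0 < E) :
    autocorrelation '' {u : Fin N → ℝ | dotProduct u u = E} =
      convexHull ℝ ((fun q => E • cosMode N q) '' Set.Iic (N / 2)) := by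
  refine Set.Subset.antisymm ?_ fun x hx => ?_
  · rintro _ ⟨u, hu, rfl⟩
    exact autocorrelation_mem_convexHull hE hu
  · obtain ⟨u, hu, rfl⟩ := exists_autocorrelation_eq_of_mem_convexHull hE hx
    exact ⟨u, hu, rfl⟩

end AutocorrelationImage

open Matrix

theorem stmt14_general (N n : ℕ) (hN : 0 < N) (hn : n ≤ N)
    (E : ℝ) (hE : 0 < E)
    (f : (Fin N → ℝ) → Fin n → ℝ)
    (hf : ∀ (u : Fin N → ℝ) (j : Fin n),
      f u j = ∑ k : Fin N, u k * u (k - Fin.castLE hn j)) :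
    f '' {u : Fin N → ℝ | u ⬝ᵥ u = E} =
      convexHull ℝ
        ((fun jj : ℕ => fun k : Fin n =>
            E * Real.cos ((k : ℕ) * jj * (2 * Real.pi / N))) '' Set.Iic (N / 2)) := by
  have : NeZero N := ⟨hN.ne'⟩
  have hf' : f = LinearMap.funLeft ℝ ℝ (Fin.castLE hn) ∘ autocorrelation :=
    funext fun u => funext (hf u)
  rw [hf', Set.image_comp, autocorrelation_image_sphere hE, LinearMap.image_convexHull,
    ← Set.image_comp]
  rfl

/-- For even `N`, the image of the sphere `{u : uᵀu = ℰ}` under the map with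
components `f_j(u) = ∑ₖ u_k u_{(k-j) mod N}`, `j = 0,...,n-1`, equals the convex
hull of the vectors `ℰ ξ_j(1:n)`, `j = 0,...,N/2`, where `ξ_j(1:n)` has entries
`cos(kj·2π/N)`, `k = 0,...,n-1`. -/
theorem stmt14 (N n : ℕ) (hN : 0 < N) (hNeven : Even N) (hn : n ≤ N)
    (E : ℝ) (hE : 0 < E)
    (f : (Fin N → ℝ) → Fin n → ℝ)
    (hf : ∀ (u : Fin N → ℝ) (j : Fin n),
      f u j = ∑ k : Fin N, u k * u (k - Fin.castLE hn j)) :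
    f '' {u : Fin N → ℝ | u ⬝ᵥ u = E} =
      convexHull ℝ
        ((fun jj : ℕ => fun k : Fin n =>
            E * Real.cos ((k : ℕ) * jj * (2 * Real.pi / N))) '' Set.Iic (N / 2)) :=
  stmt14_general N n hN hn E hE f hf
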